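/- Multiplication law of exponential Riordan arrays: let g, u, f, v be formal power series over ℚ with constant coefficient of f and of v equal to 0, and for power series G, F with F(0)=0 define T(G,F)(n,k) = (n!/k!)·(coefficient of X^n in G·F^k) ∈ ℚ. Then for all natural numbers n and k, ∑_{j=0}^{n} T(g,f)(n,j) · T(u,v)(j,k) = T(g·(u∘f), v∘f)(n,k), where u∘f and v∘f denote substitution of f into u and v respectively. -/

import Mathlib

/-!
Substituting `f` is a ring homomorphism, so `(u ∘ f) * (v ∘ f) ^ k = (u * v ^ k) ∘ f`. Since `f ^ j`
has order at least `j`, the `n`-th coefficient of `g * (w ∘ f)` is the finite sum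
`∑_{j ≤ n} [X^j] w * [X^n] (g * f ^ j)`; with `w = u * v ^ k` this is the matrix product, the
factorials `n!/j! * j!/k! = n!/k!` telescoping.
-/

open PowerSeries Finset

/-- Substitution (composition) of formal power series: `substPS f u = u ∘ f`,
the usual composition `∑ₙ uₙ fⁿ`, well-defined coefficient-wise when `f` has zero
constant coefficient (in that case `coeff n (f^j) = 0` for `j > n`). -/
noncomputable def substPS (f u : PowerSeries ℚ) : PowerSeries ℚ :=
  PowerSeries.mk fun n => ∑ j ∈ Finset.range (n + 1),
    (PowerSeries.coeff j u) * PowerSeries.coeff n (f ^ j)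

/-- The `(n,k)` entry of the exponential Riordan array `[G, F]`. -/
noncomputable def riordanEntry (G F : PowerSeries ℚ) (n k : ℕ) : ℚ :=
  ((n.factorial : ℚ) / (k.factorial : ℚ)) * PowerSeries.coeff n (G * F ^ k)

namespace PowerSeries

variable {R : Type*} [CommRing R] {f : R⟦X⟧}

theorem coeff_mul_pow_eq_zero_of_lt (hf : constantCoeff f = 0) (g : R⟦X⟧) {m j : ℕ}
    (hmj : m < j) : coeff m (g * f ^ j) = 0 := by
  obtain ⟨f', rfl⟩ := X_dvd_iff.mpr hf
  rw [mul_pow, mul_left_comm, coeff_X_pow_mul', if_neg (by omega)]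

theorem coeff_subst_eq_sum_range (hf : constantCoeff f = 0) (w : R⟦X⟧) {q N : ℕ}
    (hqN : q < N) : coeff q (w.subst f) = ∑ j ∈ range N, coeff j w * coeff q (f ^ j) := by
  rw [coeff_subst' (HasSubst.of_constantCoeff_zero' hf)]
  refine finsum_eq_finsetSum_of_support_subset _ fun j hj => ?_
  by_contra hjN
  have hqj : q < j := by simp only [coe_range, Set.mem_Iio, not_lt] at hjN; omega
  have hvanish := coeff_mul_pow_eq_zero_of_lt hf 1 hqj
  rw [one_mul] at hvanish
  exact hj (by simp only [hvanish, smul_zero])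

theorem coeff_mul_subst (hf : constantCoeff f = 0) (g w : R⟦X⟧) (n : ℕ) :
    coeff n (g * w.subst f) = ∑ j ∈ range (n + 1), coeff j w * coeff n (g * f ^ j) := by
  have hsubst : ∀ pq ∈ antidiagonal n, coeff pq.1 g * coeff pq.2 (w.subst f) =
      ∑ j ∈ range (n + 1), coeff j w * (coeff pq.1 g * coeff pq.2 (f ^ j)) := by
    intro pq hpq
    have hq : pq.2 < n + 1 := by rw [HasAntidiagonal.mem_antidiagonal] at hpq; omega
    rw [coeff_subst_eq_sum_range hf w hq, mul_sum]
    exact sum_congr rfl fun _ _ => mul_left_comm _ _ _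
  simp only [coeff_mul, sum_congr rfl hsubst, mul_sum]
  exact sum_comm

end PowerSeries

theorem substPS_eq_subst {f : ℚ⟦X⟧} (hf : constantCoeff f = 0) (w : ℚ⟦X⟧) :
    substPS f w = w.subst f := by
  ext q
  rw [substPS, coeff_mk, coeff_subst_eq_sum_range hf w q.lt_succ_self]

theorem riordan_mul (g u f v : PowerSeries ℚ)
    (hf : PowerSeries.constantCoeff f = 0) (n k : ℕ) :
    ∑ j ∈ Finset.range (n + 1), riordanEntry g f n j * riordanEntry u v j k
      = riordanEntry (g * substPS f u) (substPS f v) n k := by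
  have hfs := HasSubst.of_constantCoeff_zero' hf
  rw [riordanEntry, substPS_eq_subst hf, substPS_eq_subst hf, mul_assoc, ← subst_pow hfs,
    ← subst_mul hfs, coeff_mul_subst hf, mul_sum]
  refine sum_congr rfl fun j _ => ?_
  rw [riordanEntry, riordanEntry]
  field_simp
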